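/- The relation com followed by (com ∪ (co;rf) ∪ (fr;rf)) is contained in com ∪ (co;rf) ∪ (fr;rf): for all events x, p, y, if com x p and either com p y, or (co;rf) p y, or (fr;rf) p y, then com x y, or (co;rf) x y, or (fr;rf) x y. -/

import Mathlib

/-! After a `co` or `fr` edge the middle event `p` is a write, after an `rf` edge it is a read.
A write is not the source of an `fr` edge and a read is not the source of a `co` or `rf` edge,
so the only compositions that occur are `co;co ⊆ co`, `fr;co ⊆ fr` (transitivity of `co`),
`rf;fr ⊆ co` (a read has a unique `rf` source), and `co;rf`, `fr;rf`, which already have the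
required form. -/

section

variable {E : Type*} {W Rd : E → Prop} {co rf fr : E → E → Prop}

theorem read_of_fr (hrf_read : ∀ w r, rf w r → Rd r)
    (hfr : ∀ r w, fr r w ↔ ∃ w', rf w' r ∧ co w' w) {r w : E} (h : fr r w) : Rd r := by
  obtain ⟨w', hw', -⟩ := (hfr r w).1 h
  exact hrf_read w' r hw'

theorem write_of_fr (hco_write : ∀ x y, co x y → W y)
    (hfr : ∀ r w, fr r w ↔ ∃ w', rf w' r ∧ co w' w) {r w : E} (h : fr r w) : W w := by
  obtain ⟨w', -, hco⟩ := (hfr r w).1 h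
  exact hco_write w' w hco

theorem fr_of_fr_of_co (hco_trans : ∀ x y z, co x y → co y z → co x z)
    (hfr : ∀ r w, fr r w ↔ ∃ w', rf w' r ∧ co w' w) {x p y : E} (hxp : fr x p) (hpy : co p y) :
    fr x y := by
  obtain ⟨w, hw, hwp⟩ := (hfr x p).1 hxp
  exact (hfr x y).2 ⟨w, hw, hco_trans w p y hwp hpy⟩

theorem co_of_rf_of_fr (hrf_read : ∀ w r, rf w r → Rd r) (hrf_ex : ∀ r, Rd r → ∃! w, rf w r)
    (hfr : ∀ r w, fr r w ↔ ∃ w', rf w' r ∧ co w' w) {x p y : E} (hxp : rf x p) (hpy : fr p y) :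
    co x y := by
  obtain ⟨w, hwp, hwy⟩ := (hfr p y).1 hpy
  rwa [(hrf_ex p (hrf_read x p hxp)).unique hxp hwp]

theorem com_seq_of_write (hdisj : ∀ e, ¬ (W e ∧ Rd e)) (hrf_read : ∀ w r, rf w r → Rd r)
    (hfr : ∀ r w, fr r w ↔ ∃ w', rf w' r ∧ co w' w) {p y : E} (hp : W p)
    (hpy : (co p y ∨ rf p y ∨ fr p y) ∨ (∃ q, co p q ∧ rf q y) ∨ (∃ q, fr p q ∧ rf q y)) :
    co p y ∨ rf p y ∨ ∃ q, co p q ∧ rf q y := by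
  have not_fr : ∀ {q}, ¬ fr p q := fun h => hdisj p ⟨hp, read_of_fr hrf_read hfr h⟩
  rcases hpy with (h | h | h) | h | ⟨q, h, -⟩
  exacts [Or.inl h, Or.inr (Or.inl h), (not_fr h).elim, Or.inr (Or.inr h), (not_fr h).elim]

theorem com_seq_of_read (hdisj : ∀ e, ¬ (W e ∧ Rd e)) (hco_write_left : ∀ x y, co x y → W x)
    (hrf_write : ∀ w r, rf w r → W w) {p y : E} (hp : Rd p)
    (hpy : (co p y ∨ rf p y ∨ fr p y) ∨ (∃ q, co p q ∧ rf q y) ∨ (∃ q, fr p q ∧ rf q y)) :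
    fr p y ∨ ∃ q, fr p q ∧ rf q y := by
  have not_co : ∀ {q}, ¬ co p q := fun h => hdisj p ⟨hco_write_left p _ h, hp⟩
  have not_rf : ∀ {q}, ¬ rf p q := fun h => hdisj p ⟨hrf_write p _ h, hp⟩
  rcases hpy with (h | h | h) | ⟨q, h, -⟩ | h
  exacts [(not_co h).elim, (not_rf h).elim, Or.inl h, (not_co h).elim, Or.inr h]

end

theorem com_seq_closure_general {E A : Type*} (W Rd : E → Prop) (addr : E → A)
    (co rf fr com : E → E → Prop)
    (hdisj : ∀ e, ¬ (W e ∧ Rd e))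
    (hco_trans : ∀ x y z, co x y → co y z → co x z)
    (hco_wf : ∀ x y, co x y → W x ∧ W y ∧ addr x = addr y)
    (hrf_wf : ∀ w r, rf w r → W w ∧ Rd r ∧ addr w = addr r)
    (hrf_ex : ∀ r, Rd r → ∃! w, rf w r)
    (hfr : ∀ r w, fr r w ↔ ∃ w', rf w' r ∧ co w' w)
    (hcom : ∀ x y, com x y ↔ co x y ∨ rf x y ∨ fr x y) :
    ∀ x p y, com x p → (com p y ∨ (∃ q, co p q ∧ rf q y) ∨ (∃ q, fr p q ∧ rf q y)) → (com x y ∨ (∃ q, co x q ∧ rf q y) ∨ (∃ q, fr x q ∧ rf q y)) := by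
  have hco_write : ∀ x y, co x y → W y := fun x y h => (hco_wf x y h).2.1
  have hrf_read : ∀ w r, rf w r → Rd r := fun w r h => (hrf_wf w r h).2.1
  intro x p y hxp hpy
  simp only [hcom] at hxp hpy ⊢
  rcases hxp with hxp | hxp | hxp
  · rcases com_seq_of_write hdisj hrf_read hfr (hco_write x p hxp) hpy with h | h | ⟨q, hpq, hqy⟩
    · exact Or.inl (Or.inl (hco_trans x p y hxp h))
    · exact Or.inr (Or.inl ⟨p, hxp, h⟩)
    · exact Or.inr (Or.inl ⟨q, hco_trans x p q hxp hpq, hqy⟩)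
  · rcases com_seq_of_read hdisj (fun x y h => (hco_wf x y h).1) (fun w r h => (hrf_wf w r h).1)
      (hrf_read x p hxp) hpy with h | ⟨q, hpq, hqy⟩
    · exact Or.inl (Or.inl (co_of_rf_of_fr hrf_read hrf_ex hfr hxp h))
    · exact Or.inr (Or.inl ⟨q, co_of_rf_of_fr hrf_read hrf_ex hfr hxp hpq, hqy⟩)
  · rcases com_seq_of_write hdisj hrf_read hfr (write_of_fr hco_write hfr hxp) hpy
      with h | h | ⟨q, hpq, hqy⟩
    · exact Or.inl (Or.inr (Or.inr (fr_of_fr_of_co hco_trans hfr hxp h)))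
    · exact Or.inr (Or.inr ⟨p, hxp, h⟩)
    · exact Or.inr (Or.inr ⟨q, fr_of_fr_of_co hco_trans hfr hxp hpq, hqy⟩)

theorem com_seq_closure {E A : Type*} (W Rd : E → Prop) (addr : E → A)
    (co rf fr com : E → E → Prop)
    (hdisj : ∀ e, ¬ (W e ∧ Rd e))
    (hco_irr : ∀ x, ¬ co x x)
    (hco_trans : ∀ x y z, co x y → co y z → co x z)
    (hco_wf : ∀ x y, co x y → W x ∧ W y ∧ addr x = addr y)
    (hco_total : ∀ x y, W x → W y → addr x = addr y → co x y ∨ x = y ∨ co y x)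
    (hrf_wf : ∀ w r, rf w r → W w ∧ Rd r ∧ addr w = addr r)
    (hrf_ex : ∀ r, Rd r → ∃! w, rf w r)
    (hfr : ∀ r w, fr r w ↔ ∃ w', rf w' r ∧ co w' w)
    (hcom : ∀ x y, com x y ↔ co x y ∨ rf x y ∨ fr x y) :
    ∀ x p y, com x p → (com p y ∨ (∃ q, co p q ∧ rf q y) ∨ (∃ q, fr p q ∧ rf q y)) → (com x y ∨ (∃ q, co x q ∧ rf q y) ∨ (∃ q, fr x q ∧ rf q y)) :=
  com_seq_closure_general W Rd addr co rf fr com hdisj hco_trans hco_wf hrf_wf hrf_ex hfr hcom
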